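/- arXiv:1111.6648 — 3 statements merged into one kernel-verified Lean document; each statement's English description precedes it below -/
import Mathlib

section
/- For every integer r ≥ 1, the polynomial identity ∑_{k=0}^{⌊(r-1)/2⌋} (-1)^k · C(r-1-k, k) · q^{1+k} · (1+q)^{r-1-2k} = q + q² + ⋯ + q^r holds in the polynomial ring ℤ[q]. -/
/-!
The left-hand side is `q · E_{r-1}(1 + q, q)`, where `E_n = dickson 2 a n` is the Dickson polynomial
of the second kind, `E_{n+2} = x E_{n+1} - a E_n`; expanding this recurrence with Pascal's rule
gives the explicit formula `E_n = ∑_k (-a)^k C(n-k, k) x^(n-2k)`. On the other hand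
`E_n(a + b, a b) = a^n + a^(n-1) b + ⋯ + b^n`, because both sides satisfy
`u_{n+2} = (a + b) u_{n+1} - a b u_n` with the same initial values. Take `a = q`, `b = 1`.
-/

open Finset Polynomial

namespace Polynomial

variable {R : Type*} [CommRing R]

noncomputable def dicksonTwoTerm (a : R) (n k : ℕ) : R[X] :=
  C ((-a) ^ k * (n - k).choose k) * X ^ (n - 2 * k)

theorem dicksonTwoTerm_eq_zero (a : R) {n k : ℕ} (h : n / 2 < k) : dicksonTwoTerm a n k = 0 := by
  simp [dicksonTwoTerm, Nat.choose_eq_zero_of_lt (show n - k < k by omega)]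

theorem sum_dicksonTwoTerm_of_le (a : R) {n M : ℕ} (h : n / 2 + 1 ≤ M) :
    ∑ k ∈ range (n / 2 + 1), dicksonTwoTerm a n k = ∑ k ∈ range M, dicksonTwoTerm a n k :=
  sum_subset (range_subset_range.2 h) fun _ _ hk ↦
    dicksonTwoTerm_eq_zero a (by simpa using hk)

theorem dicksonTwoTerm_add_two_succ (a : R) {n k : ℕ} (hk : 2 * k ≤ n) :
    dicksonTwoTerm a (n + 2) (k + 1) =
      X * dicksonTwoTerm a (n + 1) (k + 1) - C a * dicksonTwoTerm a n k := by
  rcases hk.lt_or_eq with hk | rfl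
  · have pascal : (n + 2 - (k + 1)).choose (k + 1) =
        (n + 1 - (k + 1)).choose (k + 1) + (n - k).choose k := by
      rw [show n + 2 - (k + 1) = n - k + 1 by omega, show n + 1 - (k + 1) = n - k by omega,
        Nat.choose_succ_succ', add_comm]
    obtain ⟨m, hm⟩ : ∃ m, n - 2 * k = m + 1 := ⟨n - 2 * k - 1, by omega⟩
    simp only [dicksonTwoTerm, pascal, show n + 2 - 2 * (k + 1) = m + 1 by omega,
      show n + 1 - 2 * (k + 1) = m by omega, hm]
    simp only [map_mul, map_pow, map_neg, Nat.cast_add, map_add]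
    ring
  · rw [dicksonTwoTerm_eq_zero a (show (2 * k + 1) / 2 < k + 1 by omega), mul_zero, zero_sub]
    simp only [dicksonTwoTerm, show 2 * k + 2 - (k + 1) = k + 1 by omega, Nat.choose_self,
      show 2 * k - k = k by omega, Nat.sub_self, show 2 * k + 2 - 2 * (k + 1) = 0 by omega]
    simp only [map_mul, map_pow, map_neg, Nat.cast_one]
    ring

theorem dickson_two_eq_sum (a : R) :
    ∀ n : ℕ, dickson 2 a n = ∑ k ∈ range (n / 2 + 1), dicksonTwoTerm a n k
  | 0 => by norm_num [dicksonTwoTerm]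
  | 1 => by simp [dicksonTwoTerm]
  | n + 2 => by
    have leading : dicksonTwoTerm a (n + 2) 0 = X * dicksonTwoTerm a (n + 1) 0 := by
      simp [dicksonTwoTerm, pow_succ']
    rw [dickson_add_two, dickson_two_eq_sum a (n + 1), dickson_two_eq_sum a n,
      show (n + 2) / 2 + 1 = n / 2 + 1 + 1 by omega,
      sum_dicksonTwoTerm_of_le a (show (n + 1) / 2 + 1 ≤ n / 2 + 1 + 1 by omega),
      sum_range_succ' (dicksonTwoTerm a (n + 2)), sum_range_succ' (dicksonTwoTerm a (n + 1)),
      sum_congr rfl fun k hk ↦ dicksonTwoTerm_add_two_succ a (k := k)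
        (by have := mem_range.1 hk; omega), sum_sub_distrib, leading, mul_add, mul_sum, mul_sum]
    abel

theorem dickson_two_mul_eval_add (a b : R) :
    ∀ n : ℕ, (dickson 2 (a * b) n).eval (a + b) = ∑ i ∈ range (n + 1), a ^ i * b ^ (n - i)
  | 0 => by norm_num
  | 1 => by simp [sum_range_succ]; ring
  | n + 2 => by
    have succ_eq (m : ℕ) : ∑ i ∈ range (m + 2), a ^ i * b ^ (m + 1 - i) =
        a ^ (m + 1) + b * ∑ i ∈ range (m + 1), a ^ i * b ^ (m - i) := by
      simpa using geom_sum₂_succ_eq a b (n := m + 1)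
    simp only [dickson_add_two, eval_sub, eval_mul, eval_X, eval_C,
      dickson_two_mul_eval_add a b (n + 1), dickson_two_mul_eval_add a b n, succ_eq]
    ring

end Polynomial

open Polynomial in
/-- `∑_{k=0}^{⌊(r-1)/2⌋} (-1)^k C(r-1-k,k) q^{1+k} (1+q)^{r-1-2k} = q + q² + ⋯ + q^r` in `ℤ[q]`. -/
theorem alternating_sum_eq_geometric (r : ℕ) (hr : 1 ≤ r) :
    ∑ k ∈ Finset.range ((r - 1) / 2 + 1),
        Polynomial.C ((-1 : ℤ) ^ k * ((r - 1 - k).choose k : ℤ)) *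
          X ^ (1 + k) * (1 + X) ^ (r - 1 - 2 * k)
      = ∑ i ∈ Finset.Icc 1 r, (X : Polynomial ℤ) ^ i := by
  obtain ⟨n, rfl⟩ := Nat.exists_eq_add_of_le' hr
  calc _ = X * ∑ k ∈ range (n / 2 + 1), (dicksonTwoTerm (X : ℤ[X]) n k).eval (X + 1) := by
        rw [Nat.add_sub_cancel, mul_sum]
        refine sum_congr rfl fun k _ ↦ ?_
        simp [dicksonTwoTerm]
        ring
    _ = X * ∑ i ∈ range (n + 1), X ^ i * 1 ^ (n - i) := by
        rw [← dickson_two_mul_eval_add, mul_one, dickson_two_eq_sum, eval_finsetSum]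
    _ = _ := by
        rw [mul_sum, ← Ico_add_one_right_eq_Icc, ← zero_add 1, ← sum_Ico_add', zero_add,
          ← range_eq_Ico]
        simp [pow_succ']
end

section
/- For every integer r ≥ 2, the polynomial ∑_{k=0}^{⌊(r-1)/2⌋} (-1)^k C(r-1-k,k) q^{1+k}(1+q)^{r-1-2k} − ∑_{k=0}^{⌊(r-2)/2⌋} (-1)^k C(r-2-k,k) q^{1+k}(1+q)^{r-2-2k} equals q^r in ℤ[q]. -/
/-!
Writing `S_n(q) = ∑_k (-1)^k C(n-k,k) q^k (1+q)^(n-2k)`, the difference in the theorem is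
`q (S_{r-1} - S_{r-2})`. Pascal's rule gives `S_{n+2} = (1+q) S_{n+1} - q S_n`, the recurrence
of the geometric sums `1 + q + ⋯ + q^n` (the characteristic roots are `1` and `q`), and the
initial values agree, so `S_n = 1 + q + ⋯ + q^n` and the difference is `q · q^(r-1)`.
-/

open Finset

section AltChoose

variable {R : Type*} [CommRing R]

def altChooseTerm (x : R) (n k : ℕ) : R :=
  (-1) ^ k * ((n - k).choose k : R) * x ^ k * (1 + x) ^ (n - 2 * k)

theorem altChooseTerm_eq_zero_of_lt (x : R) {n k : ℕ} (h : n < 2 * k) :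
    altChooseTerm x n k = 0 := by
  simp [altChooseTerm, Nat.choose_eq_zero_of_lt (by omega : n - k < k)]

theorem altChooseTerm_zero_right (x : R) (n : ℕ) : altChooseTerm x n 0 = (1 + x) ^ n := by
  simp [altChooseTerm]

theorem altChooseTerm_succ_succ (x : R) (n k : ℕ) :
    altChooseTerm x (n + 2) (k + 1)
      = (1 + x) * altChooseTerm x (n + 1) (k + 1) - x * altChooseTerm x n k := by
  rcases lt_or_ge n (2 * k) with hlt | hle
  · rw [altChooseTerm_eq_zero_of_lt (n := n + 2) (k := k + 1) x (by omega),
      altChooseTerm_eq_zero_of_lt (n := n + 1) (k := k + 1) x (by omega),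
      altChooseTerm_eq_zero_of_lt x hlt]
    ring
  have pascal : (n + 2 - (k + 1)).choose (k + 1) = (n - k).choose k + (n - k).choose (k + 1) := by
    rw [show n + 2 - (k + 1) = n - k + 1 by omega, Nat.choose_succ_succ']
  -- at the boundary `n = 2k` the exponents disagree, but the binomial coefficient vanishes
  have hshift : ((n - k).choose (k + 1) : R) * (1 + x) ^ (n - 2 * k)
      = (n - k).choose (k + 1) * ((1 + x) * (1 + x) ^ (n + 1 - 2 * (k + 1))) := by
    rcases eq_or_lt_of_le hle with rfl | hlt
    · simp [Nat.choose_eq_zero_of_lt (by omega : 2 * k - k < k + 1)]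
    · rw [← pow_succ', show n + 1 - 2 * (k + 1) + 1 = n - 2 * k by omega]
  simp only [altChooseTerm, pascal, show n + 1 - (k + 1) = n - k by omega,
    show n + 2 - 2 * (k + 1) = n - 2 * k by omega]
  push_cast
  linear_combination (-1) ^ (k + 1) * x ^ (k + 1) * hshift

theorem sum_range_altChooseTerm_of_lt (x : R) {n N M : ℕ} (hN : n / 2 < N) (hM : n / 2 < M) :
    ∑ k ∈ range N, altChooseTerm x n k = ∑ k ∈ range M, altChooseTerm x n k := by
  have half {N : ℕ} (hN : n / 2 < N) :
      ∑ k ∈ range (n / 2 + 1), altChooseTerm x n k = ∑ k ∈ range N, altChooseTerm x n k :=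
    sum_subset (by intro k; simp only [mem_range]; omega) fun k _ hk =>
      altChooseTerm_eq_zero_of_lt x (by simp only [mem_range] at hk; omega)
  rw [← half hN, half hM]

theorem sum_altChooseTerm_succ_succ (x : R) (n : ℕ) :
    ∑ k ∈ range (n + 3), altChooseTerm x (n + 2) k
      = (1 + x) * ∑ k ∈ range (n + 3), altChooseTerm x (n + 1) k
        - x * ∑ k ∈ range (n + 3), altChooseTerm x n k := by
  rw [sum_range_succ' (altChooseTerm x (n + 2)), sum_range_succ' (altChooseTerm x (n + 1)),
    sum_range_altChooseTerm_of_lt x (N := n + 3) (M := n + 2) (by omega) (by omega)]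
  simp only [altChooseTerm_succ_succ, altChooseTerm_zero_right, sum_sub_distrib, ← mul_sum]
  ring

theorem sum_altChooseTerm_eq_geom_sum (x : R) (n : ℕ) :
    ∑ k ∈ range (n + 1), altChooseTerm x n k = ∑ j ∈ range (n + 1), x ^ j := by
  induction n using Nat.twoStepInduction with
  | zero => simp [altChooseTerm]
  | one => simp [altChooseTerm, sum_range_succ]
  | more n ih₀ ih₁ =>
    rw [sum_altChooseTerm_succ_succ,
      sum_range_altChooseTerm_of_lt x (N := n + 3) (M := n + 2) (by omega) (by omega), ih₁,
      sum_range_altChooseTerm_of_lt x (N := n + 3) (M := n + 1) (by omega) (by omega), ih₀,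
      sum_range_succ _ (n + 2), sum_range_succ _ (n + 1)]
    ring

end AltChoose

open Polynomial in
theorem C_mul_X_pow_mul_eq_X_mul_altChooseTerm (n k : ℕ) :
    C ((-1 : ℤ) ^ k * ((n - k).choose k : ℤ)) * X ^ (1 + k) * (1 + X) ^ (n - 2 * k)
      = X * altChooseTerm (X : ℤ[X]) n k := by
  simp only [altChooseTerm, map_mul, map_pow, map_neg, map_one, map_natCast]
  ring

open Polynomial in
/-- The `q`-analog of the zero weight multiplicity in the `so(2r+1)` representation with
highest weight the sum of the simple roots equals `q^r`. -/
theorem q_mult_of_zero_weight (r : ℕ) (hr : 2 ≤ r) :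
    (∑ k ∈ Finset.range ((r - 1) / 2 + 1),
        Polynomial.C ((-1 : ℤ) ^ k * ((r - 1 - k).choose k : ℤ)) *
          X ^ (1 + k) * (1 + X) ^ (r - 1 - 2 * k))
      - (∑ k ∈ Finset.range ((r - 2) / 2 + 1),
        Polynomial.C ((-1 : ℤ) ^ k * ((r - 2 - k).choose k : ℤ)) *
          X ^ (1 + k) * (1 + X) ^ (r - 2 - 2 * k))
      = (X : Polynomial ℤ) ^ r := by
  obtain ⟨m, rfl⟩ : ∃ m, r = m + 2 := ⟨r - 2, by omega⟩
  simp only [C_mul_X_pow_mul_eq_X_mul_altChooseTerm, ← mul_sum,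
    show m + 2 - 1 = m + 1 by omega, Nat.add_sub_cancel]
  rw [sum_range_altChooseTerm_of_lt X (n := m + 1) (M := m + 2) (by omega) (by omega),
    sum_range_altChooseTerm_of_lt X (n := m) (M := m + 1) (by omega) (by omega),
    sum_altChooseTerm_eq_geom_sum, sum_altChooseTerm_eq_geom_sum, sum_range_succ _ (m + 1)]
  ring
end

section
/- For the Weyl group W of type B_r (r ≥ 2), identified with signed permutations of ℝ^r generated by simple reflections s_1,...,s_r, let ρ = (r−½)ε_1 + (r−3/2)ε_2 + ⋯ + ½ε_r and ϖ_1 = ε_1. If σ = s_{i_1} s_{i_2} ⋯ s_{i_k} where i_1,...,i_k are pairwise nonconsecutive integers with 2 ≤ i_j ≤ r, then σ(ϖ_1 + ρ) − ρ = ϖ_1 − (α_{i_1} + ⋯ + α_{i_k}), which is a nonnegative integral combination of the simple roots α_1,...,α_r (where α_i = ε_i − ε_{i+1} for i < r and α_r = ε_r). -/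
/-!
A simple reflection acts by `s_m v = v - ⟨v, α_m^∨⟩ α_m`. For `2 ≤ m` we have `⟨ϖ_1, α_m^∨⟩ = 0`,
`⟨ρ, α_m^∨⟩ = 1`, and `⟨α_b, α_m^∨⟩ = 0` whenever `|b - m| ≥ 2`. Applying the reflections of the
word one at a time to `ϖ_1 + ρ`, each one therefore pairs to `1` with its coroot and just subtracts
its simple root. Since `ϖ_1 = α_1 + ⋯ + α_r` and the `i_j` are distinct, what remains is the sum of
the `α_i` with `i` not among the `i_j`.
-/

open Finset

theorem Finset.sum_sub_sum_eq_sum_ite_smul {ι R M : Type*} [DecidableEq ι] [Ring R]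
    [AddCommGroup M] [Module R M] {s t : Finset ι} (h : t ⊆ s) (f : ι → M) :
    ∑ i ∈ s, f i - ∑ i ∈ t, f i = ∑ i ∈ s, ((if i ∈ t then 0 else 1 : ℕ) : R) • f i := by
  rw [← sum_sdiff_eq_sub h, sdiff_eq_filter, sum_filter]
  exact sum_congr rfl fun i _ => by split_ifs <;> simp

noncomputable section

-- Vectors of `ℝ^r` are functions `ℕ → ℝ` supported on `1, …, r`, with `ε_i = Pi.single i 1`.
namespace TypeB

def simpleRoot (r i : ℕ) : ℕ → ℝ :=
  if i = r then Pi.single r 1 else Pi.single i 1 - Pi.single (i + 1) 1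

def simpleCoroot (r m : ℕ) : (ℕ → ℝ) →ₗ[ℝ] ℝ :=
  let e (j : ℕ) : (ℕ → ℝ) →ₗ[ℝ] ℝ := LinearMap.proj j
  if m = r then 2 • e m else e m - e (m + 1)

def rho (r : ℕ) : ℕ → ℝ := ∑ i ∈ Icc 1 r, ((r : ℝ) - i + 1 / 2) • Pi.single i 1

def simpleReflection (r m : ℕ) (v : ℕ → ℝ) : ℕ → ℝ :=
  v - simpleCoroot r m v • simpleRoot r m

variable {r m : ℕ}

theorem simpleCoroot_apply (v : ℕ → ℝ) :
    simpleCoroot r m v = if m = r then 2 * v m else v m - v (m + 1) := by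
  unfold simpleCoroot
  split_ifs <;> simp

theorem simpleReflection_apply_of_lt (hm : m < r) (v : ℕ → ℝ) (j : ℕ) :
    simpleReflection r m v j = if j = m then v (m + 1) else if j = m + 1 then v m else v j := by
  simp only [simpleReflection, simpleRoot, simpleCoroot_apply, hm.ne, if_false, Pi.sub_apply,
    Pi.smul_apply, Pi.single_apply, smul_eq_mul]
  split_ifs <;> subst_vars <;> first | omega | ring

theorem simpleReflection_self_apply (v : ℕ → ℝ) (j : ℕ) :
    simpleReflection r r v j = if j = r then -v j else v j := by
  simp only [simpleReflection, simpleRoot, simpleCoroot_apply, if_true, Pi.sub_apply,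
    Pi.smul_apply, Pi.single_apply, smul_eq_mul]
  split_ifs with h
  · subst h; ring
  · ring

theorem rho_apply {j : ℕ} (hj : j ∈ Icc 1 r) : rho r j = r - j + 1 / 2 := by
  simp [rho, Finset.sum_apply, Pi.single_apply, hj]

theorem simpleCoroot_rho (hm : 1 ≤ m) (hmr : m ≤ r) : simpleCoroot r m (rho r) = 1 := by
  rw [simpleCoroot_apply, rho_apply (mem_Icc.2 ⟨hm, hmr⟩)]
  split_ifs with h
  · subst h; ring
  · rw [rho_apply (mem_Icc.2 ⟨by omega, by omega⟩)]; push_cast; ring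

theorem simpleCoroot_single_one (hm : 2 ≤ m) : simpleCoroot r m (Pi.single 1 1) = 0 := by
  rw [simpleCoroot_apply]
  split_ifs <;> simp [show m ≠ 1 by omega, show m ≠ 0 by omega]

theorem simpleRoot_apply_eq_zero {b j : ℕ} (hb : j ≠ b) (hb' : j ≠ b + 1) :
    simpleRoot r b j = 0 := by
  unfold simpleRoot
  split_ifs with h
  · subst h; simp [hb]
  · simp [hb, hb']

theorem simpleCoroot_simpleRoot_of_two_le_dist {b : ℕ} (h : 2 ≤ |(m : ℤ) - b|) :
    simpleCoroot r m (simpleRoot r b) = 0 := by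
  have hfar := le_abs.1 h
  rw [simpleCoroot_apply, simpleRoot_apply_eq_zero (r := r) (by omega) (by omega),
    simpleRoot_apply_eq_zero (r := r) (j := m + 1) (by omega) (by omega)]
  simp

theorem sum_simpleRoot (hr : 1 ≤ r) : ∑ i ∈ Icc 1 r, simpleRoot r i = Pi.single 1 1 := by
  have htel : ∑ i ∈ Ico 1 r, simpleRoot r i = Pi.single 1 1 - Pi.single r 1 := by
    rw [sum_congr rfl fun i hi => by rw [simpleRoot, if_neg (by simp at hi; omega)]]
    simpa only [neg_sub_neg] using sum_Ico_sub (fun i => -(Pi.single i 1 : ℕ → ℝ)) hr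
  rw [← Ico_add_one_right_eq_Icc, sum_Ico_succ_top hr, htel, simpleRoot, if_pos rfl,
    sub_add_cancel]

theorem foldr_eq_sub_sum_simpleRoot (s : ℕ → (ℕ → ℝ) → (ℕ → ℝ))
    (hs : ∀ m, 2 ≤ m → m ≤ r → s m = simpleReflection r m) (L : List ℕ)
    (hL : ∀ b ∈ L, 2 ≤ b ∧ b ≤ r) (hpw : L.Pairwise fun a b : ℕ => 2 ≤ |(a : ℤ) - b|) :
    L.foldr s (Pi.single 1 1 + rho r) = Pi.single 1 1 + rho r - (L.map (simpleRoot r)).sum := by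
  induction L with
  | nil => simp
  | cons a t ih =>
    rw [List.pairwise_cons] at hpw
    obtain ⟨ha2, har⟩ := hL a List.mem_cons_self
    have hpair : simpleCoroot r a (Pi.single 1 1 + rho r - (t.map (simpleRoot r)).sum) = 1 := by
      have hfar : ((t.map (simpleRoot r)).map (simpleCoroot r a)).sum = 0 :=
        List.sum_eq_zero <| by
          simpa using fun b hb => simpleCoroot_simpleRoot_of_two_le_dist (hpw.1 b hb)
      rw [map_sub, map_add, map_list_sum, hfar, simpleCoroot_single_one ha2,
        simpleCoroot_rho (by omega) har]
      ring
    rw [List.foldr_cons, ih (fun b hb => hL b (List.mem_cons_of_mem _ hb)) hpw.2, hs a ha2 har,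
      simpleReflection, hpair, one_smul, List.map_cons, List.sum_cons]
    abel

end TypeB

end

open TypeB in
/-- In type `B_r` (`r ≥ 2`): if `σ = s_{i_1} ⋯ s_{i_k}` with the `i_j` pairwise
nonconsecutive integers in `[2, r]`, then `σ(ϖ_1 + ρ) - ρ = ϖ_1 - (α_{i_1} + ⋯ + α_{i_k})`,
a nonnegative integral combination of the simple roots. -/
theorem type_B_weyl_alternation (r k : ℕ) (hr : 2 ≤ r)
    (ε : ℕ → ℕ → ℝ) (hε : ∀ i j, ε i j = if j = i then 1 else 0)
    (α : ℕ → ℕ → ℝ)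
    (hα : ∀ i, 1 ≤ i → i < r → α i = ε i - ε (i + 1))
    (hαr : α r = ε r)
    (ρ : ℕ → ℝ) (hρ : ρ = ∑ i ∈ Finset.Icc 1 r, ((r : ℝ) - i + 1 / 2) • ε i)
    (s : ℕ → (ℕ → ℝ) → (ℕ → ℝ))
    (hs : ∀ m, 1 ≤ m → m < r → ∀ v j, s m v j =
      if j = m then v (m + 1) else if j = m + 1 then v m else v j)
    (hsr : ∀ v j, s r v j = if j = r then -v j else v j)
    (ι : Fin k → ℕ)
    (hι : ∀ a, 2 ≤ ι a ∧ ι a ≤ r)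
    (hnc : ∀ a b, a ≠ b → 2 ≤ |(ι a : ℤ) - (ι b : ℤ)|) :
    (List.ofFn ι).foldr s (ε 1 + ρ) - ρ = ε 1 - ∑ a, α (ι a) ∧
    ∃ c : ℕ → ℕ, (List.ofFn ι).foldr s (ε 1 + ρ) - ρ
      = ∑ i ∈ Finset.Icc 1 r, (c i : ℝ) • α i := by
  obtain rfl : ε = fun i => Pi.single i 1 := by
    ext i j
    rw [hε, Pi.single_apply]
  obtain rfl : ρ = rho r := hρ
  have hα' : ∀ i ∈ Icc 1 r, α i = simpleRoot r i := fun i hi => by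
    rcases (mem_Icc.1 hi).2.lt_or_eq with hlt | rfl
    · rw [simpleRoot, if_neg hlt.ne, hα i (mem_Icc.1 hi).1 hlt]
    · rw [simpleRoot, if_pos rfl, hαr]
  have hs' : ∀ m, 2 ≤ m → m ≤ r → s m = simpleReflection r m := fun m hm hmr => by
    ext v j
    rcases hmr.lt_or_eq with hlt | rfl
    · rw [hs m (by omega) hlt, simpleReflection_apply_of_lt hlt]
    · rw [hsr, simpleReflection_self_apply]
  have hinj : Function.Injective ι := fun a b hab => by
    by_contra hne
    simpa [hab] using hnc a b hne
  have hsub : univ.image ι ⊆ Icc 1 r := fun i hi => by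
    obtain ⟨a, -, rfl⟩ := mem_image.1 hi
    exact mem_Icc.2 ⟨by linarith [hι a], (hι a).2⟩
  have hfold : (List.ofFn ι).foldr s (Pi.single 1 1 + rho r) - rho r
      = ∑ i ∈ Icc 1 r, α i - ∑ i ∈ univ.image ι, α i := by
    rw [foldr_eq_sub_sum_simpleRoot s hs' _ (by simpa [List.mem_ofFn] using hι)
      (List.pairwise_ofFn.2 fun a b hab => hnc a b hab.ne), List.map_ofFn, List.sum_ofFn,
      sum_congr rfl hα', sum_simpleRoot (by omega), sum_congr rfl fun i hi => hα' i (hsub hi),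
      sum_image fun a _ b _ hab => hinj hab]
    abel
  refine ⟨?_, _, hfold.trans (sum_sub_sum_eq_sum_ite_smul hsub α)⟩
  rw [hfold, sum_image fun a _ b _ hab => hinj hab, sum_congr rfl hα', sum_simpleRoot (by omega)]
end
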